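/- arXiv:0912.1524 — 3 statements merged into one kernel-verified Lean document; each statement's English description precedes it below -/
import Mathlib

section
/- Let p be an odd prime, R a commutative ring, Z ∈ R with Z² = 1, and E a unit of R satisfying E^{2p} − 2Z·E^{2p−1} + 2E^{2p−2} − 2Z·E^{2p−3} + ⋯ − 2Z·E + 1 = 0, i.e. ∑_{i=0}^{2p} c_i E^i = 0 where c_0 = c_{2p} = 1, c_i = 2(−1)^i for even i with 0 < i < 2p, and c_i = (−1)^i·2Z for odd i. Writing E^{<n>} = Eⁿ + E⁻ⁿ, one has E^{<p+1>} = E^{<p−1>}. -/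
def ebr {R : Type*} [CommRing R] (E : Rˣ) (n : ℤ) : R :=
  ((E ^ n : Rˣ) : R) + ((E ^ (-n) : Rˣ) : R)

theorem stmt_2 {R : Type*} [CommRing R] (p : ℕ) (hp : p.Prime) (hodd : Odd p)
    (Z : R) (hZ : Z ^ 2 = 1) (E : Rˣ)
    (hrel : (E : R) ^ (2 * p) + 1 +
        ∑ i ∈ Finset.Ioo 0 (2 * p),
          (if Even i then (2 : R) else -(2 * Z)) * (E : R) ^ i = 0) :
    ebr E (p + 1) = ebr E (p - 1) := by
  set x : R := (E : R) with hx
  have hppos : 0 < p := hp.pos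
  have hy2 : (-(Z*x))^2 = x^2 := by linear_combination (x^2) * hZ
  have hy2p : (-(Z*x))^(2*p) = x^(2*p) := by rw [pow_mul, pow_mul, hy2]
  have hy2p1 : (-(Z*x))^(2*p+1) = -(Z * x^(2*p+1)) := by
    rw [pow_succ, hy2p, pow_succ]; ring
  -- rewrite the sum
  have hterm : ∀ i ∈ Finset.Ioo 0 (2*p),
      (if Even i then (2:R) else -(2*Z)) * x ^ i = 2 * (-(Z*x)) ^ i := by
    intro i _
    rcases Nat.even_or_odd i with he | ho
    · obtain ⟨k, hk⟩ := he
      subst hk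
      have : (-(Z*x))^(k+k) = x^(k+k) := by
        rw [← two_mul, pow_mul, pow_mul, hy2]
      rw [if_pos ⟨k, rfl⟩, this]
    · obtain ⟨k, hk⟩ := ho
      subst hk
      have h1 : (-(Z*x))^(2*k+1) = -(Z * (x^(2*k) * x)) := by
        rw [pow_succ, pow_mul, pow_mul, hy2]; ring
      have h2 : ¬ Even (2*k+1) := by simp [Nat.even_add_one, parity_simps]
      rw [if_neg h2, h1, pow_succ]
      ring
    
  rw [Finset.sum_congr rfl hterm] at hrel
  have hgeom := geom_sum_mul (-(Z*x)) (2*p+1)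
  rw [hy2p1] at hgeom
  have hr : ∑ i ∈ Finset.range (2*p+1), (-(Z*x))^i
      = 1 + x^(2*p) + ∑ i ∈ Finset.Ioo 0 (2*p), (-(Z*x))^i := by
    rw [Finset.sum_range_succ, hy2p, Finset.range_eq_Ico,
      ← Finset.Ioo_insert_left (by positivity : 0 < 2*p),
      Finset.sum_insert (by simp), pow_zero]
    ring
  have h2S : 2 * ∑ i ∈ Finset.range (2*p+1), (-(Z*x))^i = x^(2*p) + 1 := by
    rw [hr]
    have : ∑ i ∈ Finset.Ioo 0 (2*p), 2 * (-(Z*x)) ^ i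
        = 2 * ∑ i ∈ Finset.Ioo 0 (2*p), (-(Z*x)) ^ i := by
      rw [Finset.mul_sum]
    rw [this] at hrel
    linear_combination hrel
  have key : (x^2 - 1) * (x^(2*p) - 1) = 0 := by
    linear_combination (2*(Z*x+1)) * hgeom + (Z*x+1)^2 * h2S - (x^(2*p+2) - x^2) * hZ
  -- now the conclusion
  have hu : ∀ a b : ℤ, ((E^a : Rˣ) : R) * ((E^b : Rˣ) : R) = ((E^(a+b) : Rˣ) : R) := by
    intro a b; rw [← Units.val_mul, ← zpow_add]
  have hnat : ∀ n : ℕ, ((E^(n : ℤ) : Rˣ) : R) = x ^ n := by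
    intro n; rw [zpow_natCast, Units.val_pow_eq_pow_val]
  unfold ebr
  rw [← Units.mul_left_inj (E ^ ((p:ℤ)+1)), add_mul, add_mul]
  rw [hu, hu, hu, hu]
  have e1 : ((p:ℤ)+1) + ((p:ℤ)+1) = ((2*p+2 : ℕ) : ℤ) := by push_cast; ring
  have e2 : (-((p:ℤ)+1)) + ((p:ℤ)+1) = ((0 : ℕ) : ℤ) := by push_cast; ring
  have e3 : ((p:ℤ)-1) + ((p:ℤ)+1) = ((2*p : ℕ) : ℤ) := by push_cast; ring
  have e4 : (-((p:ℤ)-1)) + ((p:ℤ)+1) = ((2 : ℕ) : ℤ) := by push_cast; ring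
  rw [e1, e2, e3, e4, hnat, hnat, hnat, hnat]
  have hx22 : x ^ (2*p+2) = x^(2*p) * x^2 := by rw [pow_add]
  rw [hx22, pow_zero]
  linear_combination key
end

section
/- Let R be a commutative ring, E a unit of R, and write E^{<n>} = Eⁿ + E⁻ⁿ. Suppose p ≥ 1 is an integer with E^{<p+1>} = E^{<p−1>}. Then E^{<p+j>} = E^{<p−j>} for all 0 ≤ j ≤ p, and E^{<2p+c>} = E^{<c>} for all c ≥ 0. -/
lemma ebr_rec {R : Type*} [CommRing R] (E : Rˣ) (n : ℤ) :
    ebr E (n + 1) + ebr E (n - 1) = ebr E 1 * ebr E n := by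
  have h1 : (-(n+1)) = (-n) - 1 := by ring
  have h2 : (-(n-1)) = (-n) + 1 := by ring
  simp only [ebr, h1, h2, zpow_add_one, zpow_sub_one, zpow_one, zpow_neg_one,
    Units.val_mul]
  ring

lemma ebr_neg {R : Type*} [CommRing R] (E : Rˣ) (n : ℤ) : ebr E (-n) = ebr E n := by
  simp [ebr, add_comm]

theorem stmt_3 {R : Type*} [CommRing R] (E : Rˣ) (p : ℤ) (hp : 1 ≤ p)
    (h : ebr E (p + 1) = ebr E (p - 1)) :
    (∀ j : ℤ, 0 ≤ j → j ≤ p → ebr E (p + j) = ebr E (p - j)) ∧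
    (∀ c : ℤ, 0 ≤ c → ebr E (2 * p + c) = ebr E c) := by
  have key : ∀ k : ℕ, ebr E (p + k) = ebr E (p - k) ∧
      ebr E (p + k + 1) = ebr E (p - k - 1) := by
    intro k
    induction k with
    | zero => exact ⟨by norm_num, by push_cast; simpa using h⟩
    | succ k ih =>
      obtain ⟨h0, h1⟩ := ih
      constructor
      · have := h1
        push_cast
        rw [show p + ((k:ℤ)+1) = p + k + 1 by ring, show p - ((k:ℤ)+1) = p - k - 1 by ring]
        exact this
      · have r1 := ebr_rec E (p + k + 1)
        have r2 := ebr_rec E (p - k - 1)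
        push_cast
        push_cast at h0 h1 r1 r2
        have e1 : ebr E (p + (k:ℤ) + 1 + 1) = ebr E 1 * ebr E (p + k + 1) - ebr E (p + k) := by
          rw [show p + (k:ℤ) + 1 - 1 = p + k by ring] at r1; linear_combination r1
        have e2 : ebr E (p - (k:ℤ) - 1 - 1) = ebr E 1 * ebr E (p - k - 1) - ebr E (p - k) := by
          rw [show p - (k:ℤ) - 1 + 1 = p - k by ring] at r2; linear_combination r2
        rw [show p + ((k:ℤ)+1) + 1 = p + k + 1 + 1 by ring,
          show p - ((k:ℤ)+1) - 1 = p - k - 1 - 1 by ring, e1, e2, h0, h1]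
  have key' : ∀ n : ℤ, 0 ≤ n → ebr E (p + n) = ebr E (p - n) := by
    intro n hn
    obtain ⟨k, rfl⟩ := Int.eq_ofNat_of_zero_le hn
    exact (key k).1
  refine ⟨fun j hj _ => key' j hj, fun c hc => ?_⟩
  have := key' (p + c) (by linarith)
  rw [show p + (p + c) = 2 * p + c by ring, show p - (p + c) = -c by ring] at this
  rw [this, ebr_neg]
end

section
/- Let R be a commutative ring, p a prime, q ≥ 1 an integer, X ∈ R, and V : ℤ → R a function satisfying V(−r) = −V(r) for all r, V 0 = 0, and X · V(r) = V(r + q) + V(r − q) for all integers r with 0 ≤ r ≤ (p−1)q. Let g : ℕ → ℤ[t] be the Dickson polynomials of the first kind (g 0 = 2, g 1 = t, g(n+2) = t·g(n+1) − g n). Then for all i ∈ {0, …, p−1} and r ∈ {1, …, q}: (g i).eval X · V(r) = V(i·q + r) − V(i·q − r). -/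
open Polynomial

noncomputable def g : ℕ → Polynomial ℤ
  | 0 => 2
  | 1 => X
  | n + 2 => X * g (n + 1) - g n

theorem stmt_14 {R : Type*} [CommRing R] (p : ℕ) (hp : p.Prime) (q : ℤ) (hq : 1 ≤ q)
    (X : R) (V : ℤ → R) (hV0 : V 0 = 0) (hVodd : ∀ r : ℤ, V (-r) = -V r)
    (hX : ∀ r : ℤ, 0 ≤ r → r ≤ ((p : ℤ) - 1) * q → X * V r = V (r + q) + V (r - q))
    (i : ℕ) (hi : i ≤ p - 1) (r : ℤ) (hr1 : 1 ≤ r) (hrq : r ≤ q) :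
    Polynomial.aeval X (g i) * V r = V ((i : ℤ) * q + r) - V ((i : ℤ) * q - r) := by
  have hp2 : (2:ℕ) ≤ p := hp.two_le
  revert hi
  induction i using Nat.twoStepInduction with
  | zero =>
    intro _
    have hg : (aeval X) (g 0) = 2 := by simp [g, map_ofNat]
    rw [hg]
    push_cast
    rw [show (0:ℤ) * q + r = r by ring, show (0:ℤ) * q - r = -r by ring, hVodd]
    ring
  | one =>
    intro _
    simp only [g, aeval_X]
    have h1 : (0:ℤ) ≤ r := by linarith
    have h2 : r ≤ ((p:ℤ) - 1) * q := by
      have : (2:ℤ) ≤ (p:ℤ) := by exact_mod_cast hp2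
      nlinarith
    have e := hX r h1 h2
    push_cast
    rw [show (1:ℤ) * q + r = r + q by ring, show (1:ℤ) * q - r = -(r - q) by ring, hVodd]
    linear_combination e
  | more n IH1 IH2 =>
    intro hi
    have hpZ : (2:ℤ) ≤ (p:ℤ) := by exact_mod_cast hp2
    have hiZ : (n:ℤ) + 2 ≤ (p:ℤ) - 1 := by
      have : n + 2 ≤ p - 1 := hi
      omega
    have hnq : (0:ℤ) ≤ (n:ℤ) := Int.natCast_nonneg n
    have H1 := IH1 (by omega)
    have H2 := IH2 (by omega)
    push_cast at H1 H2 ⊢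
    have e1 := hX (((n:ℤ)+1)*q + r) (by nlinarith) (by nlinarith)
    have e2 := hX (((n:ℤ)+1)*q - r) (by nlinarith) (by nlinarith)
    rw [show ((n:ℤ)+1)*q + r + q = ((n:ℤ)+2)*q + r by ring,
        show ((n:ℤ)+1)*q + r - q = (n:ℤ)*q + r by ring] at e1
    rw [show ((n:ℤ)+1)*q - r + q = ((n:ℤ)+2)*q - r by ring,
        show ((n:ℤ)+1)*q - r - q = (n:ℤ)*q - r by ring] at e2
    rw [show g (n+2) = Polynomial.X * g (n+1) - g n from rfl, map_sub, map_mul, aeval_X]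
    linear_combination X * H2 - H1 + e1 - e2
end
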